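/- arXiv:1703.05303 — 3 statements merged into one kernel-verified Lean document; each statement's English description precedes it below -/
import Mathlib

section
/- For σ > 0 let Y_σ be a Gaussian random variable with mean 1 and variance σ², and let h_σ = tanh(Y_σ/σ²) be the spread of the AWGN(σ²) output. Then as σ → ∞, both the first and second moments of the spread decay like σ^{−2}: lim_{σ→∞} σ²·E[tanh(Y_σ/σ²)] = 1 and lim_{σ→∞} σ²·E[tanh²(Y_σ/σ²)] = 1. -/
/-!
Since `tanh x = x + O(x³)` and `|tanh x| ≤ |x|`, we have `|tanh x ^ k - x ^ k| ≤ k |x| ^ (k + 2)`.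
For `Y ~ N(1, σ²)` this replaces `σ² E[tanh (Y/σ²) ^ k]` by the polynomial moment
`σ² E[(Y/σ²) ^ k]` up to an error `k E|Y| ^ (k + 2) / σ ^ (2k + 2) = O(σ ^ (-k))`, because
`Y = σ Z + 1` with `Z` standard normal. The polynomial moments are exact:
`σ² E[Y/σ²] = 1` and `σ² E[(Y/σ²)²] = 1 + σ⁻²`.
-/

open MeasureTheory ProbabilityTheory Filter Set Real

namespace Real

@[fun_prop]
lemma continuous_tanh : Continuous tanh := by
  simp_rw [funext tanh_eq_sinh_div_cosh]
  exact continuous_sinh.div continuous_cosh fun x => (cosh_pos x).ne'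

lemma sinh_le_mul_cosh {x : ℝ} (hx : 0 ≤ x) : sinh x ≤ x * cosh x := by
  have := (convex_Icc 0 x).image_sub_le_mul_sub_of_deriv_le continuous_sinh.continuousOn
    differentiable_sinh.differentiableOn (C := cosh x) (fun y hy => by
      rw [interior_Icc] at hy
      rw [deriv_sinh, cosh_le_cosh, abs_of_pos hy.1, abs_of_nonneg hx]
      exact hy.2.le) 0 (left_mem_Icc.2 hx) x (right_mem_Icc.2 hx) hx
  simpa [mul_comm] using this

lemma tanh_nonneg {x : ℝ} (hx : 0 ≤ x) : 0 ≤ tanh x := by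
  rw [tanh_eq_sinh_div_cosh]
  exact div_nonneg (sinh_nonneg_iff.2 hx) (cosh_pos x).le

lemma tanh_le_self {x : ℝ} (hx : 0 ≤ x) : tanh x ≤ x := by
  rw [tanh_eq_sinh_div_cosh, div_le_iff₀ (cosh_pos x)]
  exact sinh_le_mul_cosh hx

lemma self_sub_pow_three_le_tanh {x : ℝ} (hx : 0 ≤ x) : x - x ^ 3 ≤ tanh x := by
  rw [tanh_eq_sinh_div_cosh, le_div_iff₀ (cosh_pos x)]
  have h1 : 1 - x ^ 2 ≤ exp (-x ^ 2) := by linarith [add_one_le_exp (-x ^ 2)]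
  have h2 : exp (-x ^ 2) * cosh x ≤ 1 := calc
    exp (-x ^ 2) * cosh x ≤ exp (-x ^ 2) * exp (x ^ 2 / 2) := by
      gcongr; exact cosh_le_exp_half_sq x
    _ = exp (-(x ^ 2 / 2)) := by rw [← exp_add]; ring_nf
    _ ≤ 1 := exp_le_one_iff.2 (by nlinarith)
  calc (x - x ^ 3) * cosh x = x * ((1 - x ^ 2) * cosh x) := by ring
    _ ≤ x * 1 := by
      gcongr
      exact (mul_le_mul_of_nonneg_right h1 (cosh_pos x).le).trans h2
    _ ≤ sinh x := by simpa using self_le_sinh_iff.2 hx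

lemma abs_tanh_le_abs (x : ℝ) : |tanh x| ≤ |x| := by
  wlog hx : 0 ≤ x generalizing x
  · simpa [tanh_neg] using this (-x) (by linarith)
  rw [abs_of_nonneg hx, abs_of_nonneg (tanh_nonneg hx)]
  exact tanh_le_self hx

lemma abs_tanh_sub_self_le (x : ℝ) : |tanh x - x| ≤ |x| ^ 3 := by
  wlog hx : 0 ≤ x generalizing x
  · simpa [tanh_neg, neg_add_eq_sub, abs_sub_comm] using this (-x) (by linarith)
  rw [abs_of_nonpos (by linarith [tanh_le_self hx]), abs_of_nonneg hx]
  linarith [self_sub_pow_three_le_tanh hx]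

lemma abs_tanh_pow_sub_pow_le (x : ℝ) (k : ℕ) : |tanh x ^ k - x ^ k| ≤ k * |x| ^ (k + 2) := by
  rcases k with _ | k
  · simp
  calc |tanh x ^ (k + 1) - x ^ (k + 1)|
      ≤ |tanh x - x| * (k + 1 : ℕ) * max |tanh x| |x| ^ k := abs_pow_sub_pow_le _ _ _
    _ ≤ |x| ^ 3 * (k + 1 : ℕ) * |x| ^ k := by
      rw [max_eq_right (abs_tanh_le_abs x)]
      gcongr
      exact abs_tanh_sub_self_le x
    _ = (k + 1 : ℕ) * |x| ^ (k + 1 + 2) := by ring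

end Real

lemma abs_mul_integral_tanh_pow_div_sub_le {μ : Measure ℝ} [IsFiniteMeasure μ] {v : ℝ} (hv : 0 < v)
    (k : ℕ) (h_int : Integrable (fun y => y ^ k) μ) (h_int_abs : Integrable (fun y => |y| ^ (k + 2)) μ) :
    |v * ∫ y, tanh (y / v) ^ k ∂μ - v * ∫ y, (y / v) ^ k ∂μ|
      ≤ k * (∫ y, |y| ^ (k + 2) ∂μ) / v ^ (k + 1) := by
  have h_tanh : Integrable (fun y => tanh (y / v) ^ k) μ := by
    refine (integrable_const 1).mono' (by fun_prop) (ae_of_all _ fun y => ?_)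
    rw [norm_pow, Real.norm_eq_abs]
    exact pow_le_one₀ (abs_nonneg _) (abs_tanh_lt_one _).le
  have h_pow : Integrable (fun y => (y / v) ^ k) μ := by
    simpa [div_pow] using h_int.div_const (v ^ k)
  calc |v * ∫ y, tanh (y / v) ^ k ∂μ - v * ∫ y, (y / v) ^ k ∂μ|
      = v * |∫ y, (tanh (y / v) ^ k - (y / v) ^ k) ∂μ| := by
        rw [integral_sub h_tanh h_pow, ← mul_sub, abs_mul, abs_of_pos hv]
    _ ≤ v * ∫ y, k * |y / v| ^ (k + 2) ∂μ := by
        gcongr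
        refine abs_integral_le_integral_abs.trans (integral_mono (h_tanh.sub h_pow).abs ?_ ?_)
        · simpa [abs_div, div_pow, abs_of_pos hv] using (h_int_abs.div_const _).const_mul (k : ℝ)
        · exact fun y => abs_tanh_pow_sub_pow_le _ _
    _ = k * (∫ y, |y| ^ (k + 2) ∂μ) / v ^ (k + 1) := by
        simp_rw [abs_div, abs_of_pos hv, div_pow]
        rw [integral_const_mul, integral_div]
        field_simp
        ring

namespace ProbabilityTheory

lemma gaussianReal_eq_map_standard (m σ : ℝ) :
    gaussianReal m (σ ^ 2).toNNReal = (gaussianReal 0 1).map (fun z => σ * z + m) := by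
  rw [← Function.comp_def (· + m) (σ * ·),
    ← Measure.map_map (measurable_add_const m) (measurable_const_mul σ),
    gaussianReal_map_const_mul, gaussianReal_map_add_const, mul_zero, zero_add, mul_one]
  congr
  ext
  simp [sq_nonneg]

lemma integral_abs_pow_gaussianReal_le (m : ℝ) {σ : ℝ} (hσ : 1 ≤ σ) (n : ℕ) :
    ∫ y, |y| ^ n ∂gaussianReal m (σ ^ 2).toNNReal
      ≤ σ ^ n * ∫ z, (|m| + |z|) ^ n ∂gaussianReal 0 1 := by
  have h_int : Integrable (fun z => (|m| + |z|) ^ n) (gaussianReal 0 1) := by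
    simpa [abs_of_nonneg (add_nonneg (abs_nonneg m) (abs_nonneg _))] using
      ((memLp_const |m|).add (memLp_id_gaussianReal (n : NNReal)).norm).integrable_norm_pow'
  rw [gaussianReal_eq_map_standard, integral_map (by fun_prop) (by fun_prop), ← integral_const_mul]
  refine integral_mono_of_nonneg (ae_of_all _ fun z => by positivity) (h_int.const_mul _)
    (ae_of_all _ fun z => ?_)
  dsimp only
  rw [← mul_pow]
  gcongr
  calc |σ * z + m| ≤ σ * |z| + |m| := by
        simpa [abs_mul, abs_of_pos (by linarith : 0 < σ)] using abs_add_le (σ * z) m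
    _ ≤ σ * (|m| + |z|) := by nlinarith [abs_nonneg m]

lemma integrable_abs_pow_gaussianReal (m : ℝ) (v : NNReal) (n : ℕ) :
    Integrable (fun y => |y| ^ n) (gaussianReal m v) := by
  simpa using (memLp_id_gaussianReal (μ := m) (v := v) n).integrable_norm_pow'

lemma integrable_pow_gaussianReal (m : ℝ) (v : NNReal) (n : ℕ) :
    Integrable (fun y => y ^ n) (gaussianReal m v) :=
  (integrable_abs_pow_gaussianReal m v n).mono' (by fun_prop) (ae_of_all _ fun y => by simp)

lemma integral_sq_gaussianReal (m : ℝ) (v : NNReal) : ∫ y, y ^ 2 ∂gaussianReal m v = v + m ^ 2 := by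
  have := variance_eq_sub (memLp_id_gaussianReal (μ := m) (v := v) 2)
  simp only [variance_id_gaussianReal, Pi.pow_apply, id, integral_id_gaussianReal] at this
  linarith

end ProbabilityTheory

lemma tendsto_sq_mul_integral_tanh_pow_sub {k : ℕ} (hk : k ≠ 0) :
    Tendsto (fun σ : ℝ => σ ^ 2 * ∫ y, tanh (y / σ ^ 2) ^ k ∂gaussianReal 1 (σ ^ 2).toNNReal
      - σ ^ 2 * ∫ y, (y / σ ^ 2) ^ k ∂gaussianReal 1 (σ ^ 2).toNNReal) atTop (nhds 0) := by
  set C := ∫ z, (|1| + |z|) ^ (k + 2) ∂gaussianReal 0 1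
  refine squeeze_zero_norm' ?_ (tendsto_const_nhds.div_atTop (tendsto_pow_atTop hk) :
    Tendsto (fun σ : ℝ => k * C / σ ^ k) atTop (nhds 0))
  filter_upwards [eventually_ge_atTop 1] with σ hσ
  have hσ0 : 0 < σ := by linarith
  calc _ ≤ k * (∫ y, |y| ^ (k + 2) ∂gaussianReal 1 (σ ^ 2).toNNReal) / (σ ^ 2) ^ (k + 1) :=
        abs_mul_integral_tanh_pow_div_sub_le (by positivity) k (integrable_pow_gaussianReal _ _ _)
          (integrable_abs_pow_gaussianReal _ _ _)
    _ ≤ k * (σ ^ (k + 2) * C) / (σ ^ 2) ^ (k + 1) := by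
        gcongr
        exact integral_abs_pow_gaussianReal_le 1 hσ (k + 2)
    _ = k * C / σ ^ k := by
        field_simp
        ring

lemma tendsto_sq_mul_integral_tanh_pow {k : ℕ} (hk : k ≠ 0) {L : ℝ}
    (h : Tendsto (fun σ : ℝ => σ ^ 2 * ∫ y, (y / σ ^ 2) ^ k ∂gaussianReal 1 (σ ^ 2).toNNReal)
      atTop (nhds L)) :
    Tendsto (fun σ : ℝ => σ ^ 2 * ∫ y, tanh (y / σ ^ 2) ^ k ∂gaussianReal 1 (σ ^ 2).toNNReal)
      atTop (nhds L) := by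
  simpa using (tendsto_sq_mul_integral_tanh_pow_sub hk).add h

/-- Relation (8) of the paper: for `Y_σ ~ N(1, σ²)` (the AWGN(σ²) output given bit 0) and
spread `h_σ = tanh(Y_σ/σ²)`, as `σ → ∞` both moments decay like `σ^{−2}`:
`σ²·E[h_σ] → 1` and `σ²·E[h_σ²] → 1`. -/
theorem spread_moments_asymptotics :
    Tendsto (fun σ : ℝ =>
        σ^2 * ∫ y, Real.tanh (y / σ^2) ∂(gaussianReal 1 (σ^2).toNNReal))
      atTop (nhds 1) ∧
    Tendsto (fun σ : ℝ =>
        σ^2 * ∫ y, (Real.tanh (y / σ^2))^2 ∂(gaussianReal 1 (σ^2).toNNReal))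
      atTop (nhds 1) := by
  have hσ : ∀ᶠ σ : ℝ in atTop, σ ≠ 0 := eventually_ne_atTop 0
  constructor
  · simpa using tendsto_sq_mul_integral_tanh_pow one_ne_zero (L := 1) <|
      tendsto_const_nhds.congr' <| by
        filter_upwards [hσ] with σ hσ
        simp [integral_div, hσ]
  · refine tendsto_sq_mul_integral_tanh_pow two_ne_zero ?_
    have : Tendsto (fun σ : ℝ => 1 + (σ ^ 2)⁻¹) atTop (nhds 1) := by
      simpa using (tendsto_inv_atTop_zero.comp (tendsto_pow_atTop (α := ℝ) two_ne_zero)).const_add 1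
    refine this.congr' ?_
    filter_upwards [hσ] with σ hσ
    simp_rw [div_pow]
    rw [integral_div, integral_sq_gaussianReal, Real.coe_toNNReal _ (sq_nonneg σ)]
    field_simp
end

section
/- For 0 ≤ r ≤ m, the minimum Hamming distance of the Reed–Muller code RM(r, m) equals 2^{m−r}: every nonzero codeword f ∈ RM(r, m) is nonzero at at least 2^{m−r} points of 𝔽₂^m, and there exists a codeword in RM(r, m) that is nonzero at exactly 2^{m−r} points. -/
open MvPolynomial

open Finset in
private lemma zmod2_pow (a : ZMod 2) {k : ℕ} (hk : k ≠ 0) : a ^ k = a := by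
  have h : a = 0 ∨ a = 1 := by revert a; decide
  rcases h with h | h <;> subst h
  · exact zero_pow hk
  · exact one_pow k

open Finset in
private lemma exists_coeff (m r : ℕ) (p : MvPolynomial (Fin m) (ZMod 2)) (hp : p.totalDegree ≤ r) :
    ∃ c : Finset (Fin m) → ZMod 2, (∀ S, c S ≠ 0 → S.card ≤ r) ∧
      ∀ x : Fin m → ZMod 2, eval x p = ∑ S : Finset (Fin m), c S * ∏ i ∈ S, x i := by
  refine ⟨fun S => ∑ d ∈ p.support.filter (fun d => d.support = S), p.coeff d, ?_, ?_⟩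
  · intro S hS
    have : ∃ d ∈ p.support.filter (fun d => d.support = S), p.coeff d ≠ 0 := by
      by_contra hc
      push_neg at hc
      exact hS (Finset.sum_eq_zero hc)
    obtain ⟨d, hd, -⟩ := this
    rw [Finset.mem_filter] at hd
    obtain ⟨hd1, hd2⟩ := hd
    calc S.card = d.support.card := by rw [hd2]
      _ = ∑ i ∈ d.support, 1 := by simp
      _ ≤ d.sum fun _ e => e := Finset.sum_le_sum fun i hi =>
          Nat.one_le_iff_ne_zero.2 (Finsupp.mem_support_iff.1 hi)
      _ ≤ p.totalDegree := le_totalDegree hd1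
      _ ≤ r := hp
  · intro x
    have step1 : eval x p = ∑ d ∈ p.support, p.coeff d * ∏ i ∈ d.support, x i := by
      rw [eval_eq]
      refine Finset.sum_congr rfl fun d _ => ?_
      congr 1
      exact Finset.prod_congr rfl fun i hi => zmod2_pow (x i) (Finsupp.mem_support_iff.1 hi)
    rw [step1, ← Finset.sum_fiberwise p.support (fun d => d.support)
        (fun d => p.coeff d * ∏ i ∈ d.support, x i)]
    refine Finset.sum_congr rfl fun S _ => ?_
    rw [Finset.sum_mul]
    refine Finset.sum_congr rfl fun d hd => ?_
    rw [Finset.mem_filter] at hd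
    congr 1
    rw [hd.2]

open Finset in
private lemma zmod2_cases (a : ZMod 2) : a = 0 ∨ a = 1 := by revert a; decide

open Finset in
private lemma sum_zmod2 {M : Type*} [AddCommMonoid M] (h : ZMod 2 → M) :
    ∑ b : ZMod 2, h b = h 0 + h 1 := by
  exact Fin.sum_univ_two h

open Finset in
private lemma card_filter_succ (m : ℕ) (P : (Fin (m+1) → ZMod 2) → Prop) [DecidablePred P] :
    (Finset.univ.filter P).card
      = (Finset.univ.filter fun y : Fin m → ZMod 2 => P (Fin.cons 0 y)).card
        + (Finset.univ.filter fun y : Fin m → ZMod 2 => P (Fin.cons 1 y)).card := by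
  classical
  rw [Finset.card_filter, Finset.card_filter, Finset.card_filter]
  rw [← Fintype.sum_equiv (Fin.consEquiv fun _ => ZMod 2)
      (fun p => if P (Fin.cons p.1 p.2) then 1 else 0)
      (fun x => if P x then 1 else 0)
      (fun p => rfl)]
  rw [Fintype.sum_prod_type]
  rw [sum_zmod2 (fun b => ∑ y : Fin m → ZMod 2, if P (Fin.cons b y) then 1 else 0)]

open Finset in
private lemma decomp (m : ℕ) (c : Finset (Fin (m+1)) → ZMod 2) (b : ZMod 2) (y : Fin m → ZMod 2) :
    (∑ S : Finset (Fin (m+1)), c S * ∏ i ∈ S, (Fin.cons b y : Fin (m+1) → ZMod 2) i)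
    = (∑ T : Finset (Fin m), c (T.map (Fin.succEmb m)) * ∏ i ∈ T, y i)
      + b * (∑ T : Finset (Fin m), c (insert 0 (T.map (Fin.succEmb m))) * ∏ i ∈ T, y i) := by
  classical
  rw [← Finset.sum_filter_add_sum_filter_not Finset.univ (fun S => (0 : Fin (m+1)) ∈ S)]
  have hnot : ∀ S : Finset (Fin (m+1)), (0 : Fin (m+1)) ∉ S →
      (Finset.univ.filter (fun j : Fin m => j.succ ∈ S)).map (Fin.succEmb m) = S := by
    intro S hS
    ext i
    simp only [Finset.mem_map, Finset.mem_filter, Finset.mem_univ, true_and]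
    constructor
    · rintro ⟨j, hj, rfl⟩; exact hj
    · intro hi
      refine Fin.cases ?_ ?_ i hi <;> intro h
      · exact absurd h hS
      · exact fun h' => ⟨_, h', rfl⟩
  have h0 : (∑ S ∈ Finset.univ.filter (fun S : Finset (Fin (m+1)) => ¬ (0 : Fin (m+1)) ∈ S),
        c S * ∏ i ∈ S, (Fin.cons b y : Fin (m+1) → ZMod 2) i)
      = ∑ T : Finset (Fin m), c (T.map (Fin.succEmb m)) * ∏ i ∈ T, y i := by
    refine Finset.sum_nbij' (fun S => Finset.univ.filter (fun j : Fin m => j.succ ∈ S))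
      (fun T => T.map (Fin.succEmb m)) (fun S _ => Finset.mem_univ _)
      (fun T _ => ?_) (fun S hS => ?_) (fun T _ => ?_) (fun S hS => ?_)
    · simp [Fin.succ_ne_zero]
    · exact hnot S (by simpa using (Finset.mem_filter.1 hS).2)
    · ext j; simp
    · have hS' := hnot S (by simpa using (Finset.mem_filter.1 hS).2)
      rw [hS']
      congr 1
      conv_lhs => rw [← hS']
      rw [Finset.prod_map]
      exact Finset.prod_congr rfl fun j _ => by simp
  have h1 : (∑ S ∈ Finset.univ.filter (fun S : Finset (Fin (m+1)) => (0 : Fin (m+1)) ∈ S),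
        c S * ∏ i ∈ S, (Fin.cons b y : Fin (m+1) → ZMod 2) i)
      = b * ∑ T : Finset (Fin m), c (insert 0 (T.map (Fin.succEmb m))) * ∏ i ∈ T, y i := by
    rw [Finset.mul_sum]
    refine Finset.sum_nbij' (fun S => Finset.univ.filter (fun j : Fin m => j.succ ∈ S))
      (fun T => insert 0 (T.map (Fin.succEmb m))) (fun S _ => Finset.mem_univ _)
      (fun T _ => by simp) (fun S hS => ?_) (fun T _ => ?_) (fun S hS => ?_)
    · -- insert 0 ((filter succ∈S).map succEmb) = S when 0 ∈ S
      have h0S : (0 : Fin (m+1)) ∈ S := by simpa using (Finset.mem_filter.1 hS).2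
      have := hnot (S.erase 0) (Finset.notMem_erase _ _)
      calc insert 0 ((Finset.univ.filter (fun j : Fin m => j.succ ∈ S)).map (Fin.succEmb m))
          = insert 0 ((Finset.univ.filter (fun j : Fin m => j.succ ∈ S.erase 0)).map (Fin.succEmb m)) := by
            congr 2
            ext j
            simp [Finset.mem_erase, Fin.succ_ne_zero]
        _ = insert 0 (S.erase 0) := by rw [this]
        _ = S := Finset.insert_erase h0S
    · ext j; simp [Fin.succ_ne_zero]
    · have h0S : (0 : Fin (m+1)) ∈ S := by simpa using (Finset.mem_filter.1 hS).2
      have herase := hnot (S.erase 0) (Finset.notMem_erase _ _)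
      have hfil : Finset.univ.filter (fun j : Fin m => j.succ ∈ S)
          = Finset.univ.filter (fun j : Fin m => j.succ ∈ S.erase 0) := by
        ext j; simp [Finset.mem_erase, Fin.succ_ne_zero]
      have hSeq : insert 0 ((Finset.univ.filter (fun j : Fin m => j.succ ∈ S)).map (Fin.succEmb m)) = S := by
        rw [hfil, herase]; exact Finset.insert_erase h0S
      rw [hSeq]
      have : (∏ i ∈ S, (Fin.cons b y : Fin (m+1) → ZMod 2) i)
          = b * ∏ j ∈ Finset.univ.filter (fun j : Fin m => j.succ ∈ S), y j := by
        conv_lhs => rw [← hSeq]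
        rw [Finset.prod_insert (by simp [Fin.succ_ne_zero])]
        congr 1
        rw [Finset.prod_map]
        exact Finset.prod_congr rfl fun j _ => by simp
      rw [this]
      ring
  rw [h0, h1, add_comm]

open Finset in
private lemma zmod2_add_eq_zero : ∀ (a b : ZMod 2), a + b = 0 → a = b := by decide

open Finset in
private lemma arith1 (m r : ℕ) (h1 : 1 ≤ r) : m + 1 - r = m - (r - 1) := by omega

open Finset in
private lemma arith2 (m r : ℕ) (h2 : r ≤ m) : 2 ^ (m + 1 - r) = 2 ^ (m - r) + 2 ^ (m - r) := by
  rw [show m + 1 - r = (m - r) + 1 by omega, pow_succ]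
  ring

open Finset in
private lemma key : ∀ (m r : ℕ) (c : Finset (Fin m) → ZMod 2),
    (∀ S, c S ≠ 0 → S.card ≤ r) →
    (∃ x : Fin m → ZMod 2, ∑ S : Finset (Fin m), c S * ∏ i ∈ S, x i ≠ 0) →
    2 ^ (m - r) ≤ (Finset.univ.filter
      (fun x : Fin m → ZMod 2 => ∑ S : Finset (Fin m), c S * ∏ i ∈ S, x i ≠ 0)).card := by
  intro m
  induction m with
  | zero =>
    intro r c hc hex
    obtain ⟨x, hx⟩ := hex
    have hmem : x ∈ Finset.univ.filter
        (fun x : Fin 0 → ZMod 2 => ∑ S : Finset (Fin 0), c S * ∏ i ∈ S, x i ≠ 0) :=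
      Finset.mem_filter.2 ⟨Finset.mem_univ _, hx⟩
    have hpos := Finset.card_pos.2 ⟨x, hmem⟩
    simpa [Nat.zero_sub] using hpos
  | succ m ih =>
    intro r c hc hex
    obtain ⟨x, hx⟩ := hex
    by_cases hr : m + 1 ≤ r
    · have hmem : x ∈ Finset.univ.filter
          (fun x : Fin (m+1) → ZMod 2 => ∑ S : Finset (Fin (m+1)), c S * ∏ i ∈ S, x i ≠ 0) :=
        Finset.mem_filter.2 ⟨Finset.mem_univ _, hx⟩
      have hpos := Finset.card_pos.2 ⟨x, hmem⟩
      calc 2 ^ (m + 1 - r) = 1 := by rw [Nat.sub_eq_zero_of_le hr, pow_zero]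
        _ ≤ _ := hpos
    push_neg at hr
    have hrm : r ≤ m := Nat.lt_succ_iff.mp hr
    set c0 : Finset (Fin m) → ZMod 2 := fun T => c (T.map (Fin.succEmb m)) with hc0
    set c1 : Finset (Fin m) → ZMod 2 := fun T => c (insert 0 (T.map (Fin.succEmb m))) with hc1
    set G0 : (Fin m → ZMod 2) → ZMod 2 := fun y => ∑ T : Finset (Fin m), c0 T * ∏ i ∈ T, y i
      with hG0
    set G1 : (Fin m → ZMod 2) → ZMod 2 := fun y => ∑ T : Finset (Fin m), c1 T * ∏ i ∈ T, y i
      with hG1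
    have hdec : ∀ (b : ZMod 2) (y : Fin m → ZMod 2),
        (∑ S : Finset (Fin (m+1)), c S * ∏ i ∈ S, (Fin.cons b y : Fin (m+1) → ZMod 2) i)
        = G0 y + b * G1 y := fun b y => decomp m c b y
    have hsplit := card_filter_succ m
      (fun x : Fin (m+1) → ZMod 2 => ∑ S : Finset (Fin (m+1)), c S * ∏ i ∈ S, x i ≠ 0)
    have hf0 : (Finset.univ.filter fun y : Fin m → ZMod 2 =>
          ∑ S : Finset (Fin (m+1)), c S * ∏ i ∈ S, (Fin.cons 0 y : Fin (m+1) → ZMod 2) i ≠ 0)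
        = Finset.univ.filter fun y => G0 y ≠ 0 := by
      apply Finset.filter_congr
      intro y _
      rw [hdec 0 y]
      simp
    have hf1 : (Finset.univ.filter fun y : Fin m → ZMod 2 =>
          ∑ S : Finset (Fin (m+1)), c S * ∏ i ∈ S, (Fin.cons 1 y : Fin (m+1) → ZMod 2) i ≠ 0)
        = Finset.univ.filter fun y => G0 y + G1 y ≠ 0 := by
      apply Finset.filter_congr
      intro y _
      rw [hdec 1 y]
      simp
    rw [hsplit, hf0, hf1]
    have hc0b : ∀ T, c0 T ≠ 0 → T.card ≤ r := by
      intro T hT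
      have := hc _ hT
      rwa [Finset.card_map] at this
    have hc1card : ∀ T, c1 T ≠ 0 → T.card + 1 ≤ r := by
      intro T hT
      have h2 := hc _ hT
      rwa [Finset.card_insert_of_notMem (by simp [Fin.succ_ne_zero]), Finset.card_map] at h2
    have hc1b : ∀ T, c1 T ≠ 0 → T.card ≤ r - 1 :=
      fun T hT => Nat.le_sub_one_of_lt (hc1card T hT)
    have hxG : G0 (Fin.tail x) + x 0 * G1 (Fin.tail x) ≠ 0 := by
      rw [← hdec (x 0) (Fin.tail x), Fin.cons_self_tail]
      exact hx
    have hG1r : (∃ y, G1 y ≠ 0) → 1 ≤ r := by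
      rintro ⟨y, hy⟩
      have hT : ∃ T, c1 T ≠ 0 := by
        by_contra hC
        push_neg at hC
        exact hy (Finset.sum_eq_zero fun T _ => by rw [hC T, zero_mul])
      obtain ⟨T, hT⟩ := hT
      exact le_trans (Nat.succ_le_succ (Nat.zero_le _)) (hc1card T hT)
    by_cases h0 : ∃ y, G0 y ≠ 0
    · by_cases h1 : ∃ y, G0 y + G1 y ≠ 0
      · have b0 := ih r c0 hc0b h0
        have hsum : ∀ y : Fin m → ZMod 2,
            (∑ T : Finset (Fin m), (c0 T + c1 T) * ∏ i ∈ T, y i) = G0 y + G1 y := by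
          intro y
          rw [hG0, hG1, ← Finset.sum_add_distrib]
          exact Finset.sum_congr rfl fun T _ => by ring
        have b1 := ih r (fun T => c0 T + c1 T) (fun T hT => by
            rcases eq_or_ne (c0 T) 0 with h | h
            · refine le_trans (hc1b T ?_) (Nat.sub_le r 1)
              intro hz
              exact hT (show c0 T + c1 T = 0 by rw [h, hz, add_zero])
            · exact hc0b T h)
          (by obtain ⟨y, hy⟩ := h1; exact ⟨y, by rw [hsum y]; exact hy⟩)
        have hG01 : (Finset.univ.filter fun y : Fin m → ZMod 2 =>
              (∑ T : Finset (Fin m), (c0 T + c1 T) * ∏ i ∈ T, y i) ≠ 0)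
            = Finset.univ.filter fun y => G0 y + G1 y ≠ 0 := by
          apply Finset.filter_congr
          intro y _
          rw [hsum y]
        rw [hG01] at b1
        rw [arith2 m r hrm]
        exact Nat.add_le_add b0 b1
      · push_neg at h1
        have hG1ex : ∃ y, G1 y ≠ 0 := by
          obtain ⟨y, hy⟩ := h0
          exact ⟨y, fun hz => hy (by rw [zmod2_add_eq_zero _ _ (h1 y), hz])⟩
        have b1 := ih (r-1) c1 hc1b hG1ex
        have hfil : (Finset.univ.filter fun y : Fin m → ZMod 2 => G0 y ≠ 0)
            = Finset.univ.filter fun y => G1 y ≠ 0 := by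
          apply Finset.filter_congr
          intro y _
          rw [zmod2_add_eq_zero _ _ (h1 y)]
        calc 2 ^ (m + 1 - r) = 2 ^ (m - (r-1)) := by rw [arith1 m r (hG1r hG1ex)]
          _ ≤ (Finset.univ.filter fun y => G1 y ≠ 0).card := b1
          _ ≤ _ := by rw [← hfil]; exact Nat.le_add_right _ _
    · push_neg at h0
      have hG1ex : ∃ y, G1 y ≠ 0 := by
        refine ⟨Fin.tail x, fun hz => hxG ?_⟩
        rw [h0 (Fin.tail x), hz, zero_add, mul_zero]
      have b1 := ih (r-1) c1 hc1b hG1ex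
      have hfil : (Finset.univ.filter fun y : Fin m → ZMod 2 => G0 y + G1 y ≠ 0)
          = Finset.univ.filter fun y => G1 y ≠ 0 := by
        apply Finset.filter_congr
        intro y _
        rw [h0 y, zero_add]
      calc 2 ^ (m + 1 - r) = 2 ^ (m - (r-1)) := by rw [arith1 m r (hG1r hG1ex)]
        _ ≤ (Finset.univ.filter fun y => G1 y ≠ 0).card := b1
        _ ≤ _ := by rw [hfil]; exact Nat.le_add_left _ _

open Finset in
private lemma zmod2_ne_zero : ∀ a : ZMod 2, a ≠ 0 ↔ a = 1 := by decide

open Finset in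
private lemma witness_count (m r : ℕ) (h : r ≤ m) (T : Finset (Fin m)) (hT : T.card = r) :
    (Finset.univ.filter (fun x : Fin m → ZMod 2 => (∏ i ∈ T, x i) ≠ 0)).card = 2 ^ (m - r) := by
  classical
  have hpred : ∀ x : Fin m → ZMod 2, ((∏ i ∈ T, x i) ≠ 0) ↔ (∀ i ∈ T, x i = 1) := by
    intro x
    rw [Finset.prod_ne_zero_iff]
    exact forall₂_congr fun i _ => zmod2_ne_zero (x i)
  rw [Finset.filter_congr (fun x _ => hpred x)]
  have := Fintype.card_subtype (fun x : Fin m → ZMod 2 => ∀ i ∈ T, x i = 1)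
  rw [← this]
  have e : {x : Fin m → ZMod 2 // ∀ i ∈ T, x i = 1} ≃ ({i : Fin m // i ∉ T} → ZMod 2) :=
    { toFun := fun x j => x.1 j.1
      invFun := fun g => ⟨fun i => if h : i ∈ T then 1 else g ⟨i, h⟩, fun i hi => dif_pos hi⟩
      left_inv := by
        intro x
        ext i
        by_cases hi : i ∈ T
        · simp [dif_pos hi, x.2 i hi]
        · simp [dif_neg hi]
      right_inv := by
        intro g
        ext j
        simp [dif_neg j.2] }
  rw [Fintype.card_congr e, Fintype.card_fun]
  simp [Fintype.card_subtype_compl, Fintype.card_subtype, hT]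
  rw [Finset.filter_not, Finset.card_sdiff_of_subset (Finset.filter_subset _ _)]
  simp [Finset.filter_mem_eq_inter, hT]

/-- The Reed–Muller code RM(r, m): all functions `𝔽₂^m → 𝔽₂` given by evaluation of a
polynomial of total degree at most `r`. -/
def RM (r m : ℕ) : Set ((Fin m → ZMod 2) → ZMod 2) :=
  {f | ∃ p : MvPolynomial (Fin m) (ZMod 2), p.totalDegree ≤ r ∧ ∀ x, f x = eval x p}

/-- The minimum Hamming distance of RM(r, m) is `2^{m−r}`: every nonzero codeword is nonzero
at at least `2^{m−r}` points of `𝔽₂^m`, and some codeword is nonzero at exactly `2^{m−r}`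
points. -/
theorem RM_min_distance (m r : ℕ) (h : r ≤ m) :
    (∀ f ∈ RM r m, f ≠ 0 →
      2^(m - r) ≤ (Finset.univ.filter (fun x : Fin m → ZMod 2 => f x ≠ 0)).card) ∧
    (∃ f ∈ RM r m,
      (Finset.univ.filter (fun x : Fin m → ZMod 2 => f x ≠ 0)).card = 2^(m - r)) := by
  classical
  constructor
  · intro f hf hne
    obtain ⟨p, hp, hfp⟩ := hf
    obtain ⟨c, hc, hcval⟩ := exists_coeff m r p hp
    have hfx : ∀ x, f x = ∑ S : Finset (Fin m), c S * ∏ i ∈ S, x i := fun x : Fin m → ZMod 2 => by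
      rw [hfp x, hcval x]
    have hex : ∃ x : Fin m → ZMod 2, (∑ S : Finset (Fin m), c S * ∏ i ∈ S, x i) ≠ 0 := by
      obtain ⟨x, hx⟩ := Function.ne_iff.1 hne
      exact ⟨x, by rw [← hfx x]; simpa using hx⟩
    have hb := key m r c hc hex
    have hfil : (Finset.univ.filter (fun x : Fin m → ZMod 2 => f x ≠ 0))
        = Finset.univ.filter
          (fun x : Fin m → ZMod 2 => ∑ S : Finset (Fin m), c S * ∏ i ∈ S, x i ≠ 0) := by
      apply Finset.filter_congr
      intro x _
      rw [hfx x]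
    rw [hfil]
    exact hb
  · set T : Finset (Fin m) := (Finset.univ : Finset (Fin r)).map (Fin.castLEEmb h) with hTdef
    have hT : T.card = r := by simp [hTdef]
    refine ⟨fun x => ∏ i ∈ T, x i, ⟨∏ i ∈ T, X i, ?_, ?_⟩, ?_⟩
    · refine le_trans (totalDegree_finset_prod T fun i => X i) ?_
      calc (∑ i ∈ T, (X i : MvPolynomial (Fin m) (ZMod 2)).totalDegree)
          = ∑ i ∈ T, 1 := Finset.sum_congr rfl fun i _ => totalDegree_X i
        _ = T.card := by simp
        _ ≤ r := le_of_eq hT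
    · intro x
      simp [eval_prod]
    · exact witness_count m r h T hT
end

section
/- Let C₁ and C₂ be 𝔽₂-linear codes of the same length n, each containing a nonzero codeword, with minimum Hamming distances d₁ and d₂ respectively. Then the Plotkin construction C = {(u, u+v) : u ∈ C₁, v ∈ C₂} is a linear code of length 2n whose minimum Hamming distance equals min(2d₁, d₂). -/
/-!
A nonzero codeword `(u, u + v)` has weight `wt u + wt (u + v)`. If `v = 0` this is `2 wt u ≥ 2 d₁`;
otherwise the triangle inequality `wt v ≤ wt u + wt (u + v)` bounds it below by `wt v ≥ d₂`.
The two bounds are attained by `(u₁, u₁)` and `(0, v₂)` for minimum-weight words `u₁ ∈ C₁`,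
`v₂ ∈ C₂`.
-/

theorem hammingNorm_append {α : Type*} [Zero α] [DecidableEq α] {m k : ℕ}
    (a : Fin m → α) (b : Fin k → α) :
    hammingNorm (Fin.append a b) = hammingNorm a + hammingNorm b := by
  simp only [hammingNorm, Finset.card_filter, Fin.sum_univ_add, Fin.append_left,
    Fin.append_right]

theorem hammingNorm_le_add_hammingNorm_add {ι : Type*} [Fintype ι] {β : ι → Type*}
    [∀ i, AddGroup (β i)] [∀ i, DecidableEq (β i)] (u v : ∀ i, β i) :
    hammingNorm v ≤ hammingNorm u + hammingNorm (u + v) := by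
  calc hammingNorm v = hammingDist u (u + v) := by
        rw [hammingDist_eq_hammingNorm, neg_add_cancel_left]
    _ ≤ hammingDist u 0 + hammingDist 0 (u + v) := hammingDist_triangle _ _ _
    _ = hammingNorm u + hammingNorm (u + v) := by
        rw [hammingDist_zero_right, hammingDist_zero_left]

def Fin.appendLinearMap (R M : Type*) [Semiring R] [AddCommMonoid M] [Module R M] (m k : ℕ) :
    (Fin m → M) × (Fin k → M) →ₗ[R] (Fin (m + k) → M) where
  toFun p := Fin.append p.1 p.2
  map_add' p q := by
    funext i
    refine Fin.addCases (fun j => ?_) (fun j => ?_) i <;>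
      simp only [Prod.fst_add, Prod.snd_add, Pi.add_apply, Fin.append_left, Fin.append_right]
  map_smul' c p := by
    funext i
    refine Fin.addCases (fun j => ?_) (fun j => ?_) i <;>
      simp only [Prod.smul_fst, Prod.smul_snd, Pi.smul_apply, RingHom.id_apply,
        Fin.append_left, Fin.append_right]

section Plotkin

variable {R : Type*} [Ring R] {n : ℕ}

variable (R n) in
def plotkinMap : (Fin n → R) × (Fin n → R) →ₗ[R] (Fin (n + n) → R) :=
  Fin.appendLinearMap R R n n ∘ₗ
    (LinearMap.fst R _ _).prod (LinearMap.fst R _ _ + LinearMap.snd R _ _)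

@[simp]
theorem plotkinMap_apply (u v : Fin n → R) :
    plotkinMap R n (u, v) = Fin.append u (u + v) :=
  rfl

theorem hammingNorm_plotkinMap [DecidableEq R] (u v : Fin n → R) :
    hammingNorm (plotkinMap R n (u, v)) = hammingNorm u + hammingNorm (u + v) := by
  rw [plotkinMap_apply, hammingNorm_append]

def plotkinCode (C₁ C₂ : Submodule R (Fin n → R)) : Submodule R (Fin (n + n) → R) :=
  (C₁.prod C₂).map (plotkinMap R n)

theorem coe_plotkinCode (C₁ C₂ : Submodule R (Fin n → R)) :
    (plotkinCode C₁ C₂ : Set (Fin (n + n) → R))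
      = {w | ∃ u ∈ C₁, ∃ v ∈ C₂, w = Fin.append u (u + v)} := by
  ext w
  simp only [plotkinCode, Submodule.map_coe, Set.mem_image, SetLike.mem_coe,
    Submodule.mem_prod, Prod.exists, plotkinMap_apply, Set.mem_ofPred_eq]
  constructor
  · rintro ⟨u, v, ⟨hu, hv⟩, rfl⟩
    exact ⟨u, hu, v, hv, rfl⟩
  · rintro ⟨u, hu, v, hv, rfl⟩
    exact ⟨u, v, ⟨hu, hv⟩, rfl⟩

variable [DecidableEq R]

def nonzeroWeights {ι : Type*} [Fintype ι] (C : Submodule R (ι → R)) : Set ℕ :=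
  {w | ∃ c ∈ C, c ≠ 0 ∧ w = hammingNorm c}

theorem add_hammingNorm_mem_nonzeroWeights_plotkinCode {C₁ C₂ : Submodule R (Fin n → R)}
    {u v : Fin n → R} (hu : u ∈ C₁) (hv : v ∈ C₂)
    (hne : hammingNorm u + hammingNorm (u + v) ≠ 0) :
    hammingNorm u + hammingNorm (u + v) ∈ nonzeroWeights (plotkinCode C₁ C₂) := by
  rw [← hammingNorm_plotkinMap] at hne ⊢
  exact ⟨_, Submodule.mem_map_of_mem ⟨hu, hv⟩, hammingNorm_ne_zero_iff.mp hne, rfl⟩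

theorem min_le_of_mem_nonzeroWeights_plotkinCode {C₁ C₂ : Submodule R (Fin n → R)}
    {d₁ d₂ w : ℕ} (hd₁ : d₁ ∈ lowerBounds (nonzeroWeights C₁))
    (hd₂ : d₂ ∈ lowerBounds (nonzeroWeights C₂)) (hw : w ∈ nonzeroWeights (plotkinCode C₁ C₂)) :
    min (2 * d₁) d₂ ≤ w := by
  obtain ⟨_, ⟨⟨u, v⟩, ⟨hu, hv⟩, rfl⟩, hne, rfl⟩ := hw
  rw [← hammingNorm_ne_zero_iff, hammingNorm_plotkinMap] at hne
  rw [hammingNorm_plotkinMap]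
  by_cases hv0 : v = 0
  · subst hv0
    rw [add_zero] at hne ⊢
    have hu0 : u ≠ 0 := hammingNorm_ne_zero_iff.mp (by omega)
    have := hd₁ ⟨u, hu, hu0, rfl⟩
    omega
  · have := hd₂ ⟨v, hv, hv0, rfl⟩
    have := hammingNorm_le_add_hammingNorm_add u v
    omega

theorem isLeast_nonzeroWeights_plotkinCode {C₁ C₂ : Submodule R (Fin n → R)} {d₁ d₂ : ℕ}
    (hd₁ : IsLeast (nonzeroWeights C₁) d₁) (hd₂ : IsLeast (nonzeroWeights C₂) d₂) :
    IsLeast (nonzeroWeights (plotkinCode C₁ C₂)) (min (2 * d₁) d₂) := by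
  refine ⟨?_, fun w hw => min_le_of_mem_nonzeroWeights_plotkinCode hd₁.2 hd₂.2 hw⟩
  obtain ⟨⟨u₁, hu₁, hu₁0, rfl⟩, -⟩ := hd₁
  obtain ⟨⟨v₂, hv₂, hv₂0, rfl⟩, -⟩ := hd₂
  have hwt₁ := hammingNorm_pos_iff.mpr hu₁0
  have hwt₂ := hammingNorm_pos_iff.mpr hv₂0
  rcases le_total (2 * hammingNorm u₁) (hammingNorm v₂) with h | h
  · have := add_hammingNorm_mem_nonzeroWeights_plotkinCode hu₁ C₂.zero_mem (by omega)
    rw [add_zero] at this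
    rwa [min_eq_left h, two_mul]
  · have := add_hammingNorm_mem_nonzeroWeights_plotkinCode (u := 0) C₁.zero_mem hv₂
      (by rw [hammingNorm_zero, zero_add, zero_add]; omega)
    rw [hammingNorm_zero, zero_add, zero_add] at this
    rwa [min_eq_right h]

end Plotkin

/-- The Plotkin (u, u+v) construction: if `C₁, C₂` are binary linear codes of length `n`
with minimum Hamming distances `d₁, d₂`, then `C = {(u, u+v) : u ∈ C₁, v ∈ C₂}` is a linear
code of length `2n` with minimum Hamming distance `min(2d₁, d₂)`. -/
theorem plotkin_min_distance (n : ℕ)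
    (C₁ C₂ : Submodule (ZMod 2) (Fin n → ZMod 2)) (d₁ d₂ : ℕ)
    (hd₁ : IsLeast {w | ∃ u ∈ C₁, u ≠ 0 ∧ w = hammingNorm u} d₁)
    (hd₂ : IsLeast {w | ∃ v ∈ C₂, v ≠ 0 ∧ w = hammingNorm v} d₂) :
    ∃ C : Submodule (ZMod 2) (Fin (n + n) → ZMod 2),
      (C : Set (Fin (n + n) → ZMod 2))
          = {w | ∃ u ∈ C₁, ∃ v ∈ C₂, w = Fin.append u (u + v)} ∧
      IsLeast {w | ∃ c ∈ C, c ≠ 0 ∧ w = hammingNorm c} (min (2 * d₁) d₂) :=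
  ⟨plotkinCode C₁ C₂, coe_plotkinCode C₁ C₂, isLeast_nonzeroWeights_plotkinCode hd₁ hd₂⟩
end
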